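/- Let α ∈ (0,1), μ ∈ (0,1], T > 0, and let g, J : [0,T] → ℝ be nonnegative with g locally integrable and J continuous, and let h ≥ 0 be a constant. If g(t) ≤ J(t) + h ∫₀ᵗ exp((μ−1)/μ · (t−s)) (t−s)^{α−1} g(s) ds for all t ∈ [0,T], and J is nondecreasing on [0,T], then g(t) ≤ J(t) · E_α(h Γ(α) t^α) for all t ∈ [0,T], where E_α(x) = Σ_{k=0}^∞ x^k / Γ(αk + 1) is the one-parameter Mittag-Leffler function. -/

import Mathlib

/-!
Bound the exponential factor by `1` and extend `g` by zero to `F`. With the Riemann–Liouville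
kernel `k_a(t) = t^(a-1)/Γ(a)` for `t > 0`, the hypothesis becomes
`F ≤ J(t)·k₁ + hΓ(α)·(k_α ⋆ F)` on `(-∞, t]`. The Beta integral is the semigroup law
`k_a ⋆ k_b = k_(a+b)`, so `E = Σ_k (hΓ(α))^k k_(αk+1)`, which equals `E_α(hΓ(α) t^α)` for
`t > 0`, satisfies `E = k₁ + hΓ(α)·(k_α ⋆ E)`, and iterating the hypothesis `n` times gives
`F ≤ J(t)·E + (hΓ(α))^n (k_(αn) ⋆ F)`. Once `αn ≥ 1` the remainder at `t` is at most
`(hΓ(α))^n k_(αn)(t) ∫ g`, which tends to `0` because the Mittag-Leffler series converges; the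
ratio test gives its convergence, using `Γ(y + a) ≥ (y - 1)^a Γ(y)` (log-convexity of `Γ`).
-/

open MeasureTheory Set Filter
open scoped ENNReal Topology

noncomputable def riemannLiouvilleKernel (a : ℝ) : ℝ → ℝ≥0∞ :=
  (Ioi 0).indicator fun t => ENNReal.ofReal (t ^ (a - 1) / Real.Gamma a)

lemma riemannLiouvilleKernel_of_pos {a t : ℝ} (ht : 0 < t) :
    riemannLiouvilleKernel a t = ENNReal.ofReal (t ^ (a - 1) / Real.Gamma a) :=
  indicator_of_mem ht _

lemma riemannLiouvilleKernel_of_nonpos {a t : ℝ} (ht : t ≤ 0) :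
    riemannLiouvilleKernel a t = 0 :=
  indicator_of_notMem (not_lt.mpr ht) _

lemma riemannLiouvilleKernel_ne_top {a t : ℝ} : riemannLiouvilleKernel a t ≠ ∞ := by
  rcases le_or_gt t 0 with ht | ht
  · simp [riemannLiouvilleKernel_of_nonpos ht]
  · simp [riemannLiouvilleKernel_of_pos ht]

@[fun_prop]
lemma measurable_riemannLiouvilleKernel (a : ℝ) : Measurable (riemannLiouvilleKernel a) :=
  (Measurable.ennreal_ofReal (by fun_prop)).indicator measurableSet_Ioi

lemma riemannLiouvilleKernel_mul_eq_betaPDF {a b x z : ℝ} (ha : 0 < a) (hb : 0 < b)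
    (hx : 0 < x) :
    riemannLiouvilleKernel a (x * z) * riemannLiouvilleKernel b (-(x * z) + x) =
      ENNReal.ofReal (x ^ (a + b - 2) / Real.Gamma (a + b)) * ProbabilityTheory.betaPDF a b z := by
  rcases le_or_gt z 0 with hz | hz
  · rw [riemannLiouvilleKernel_of_nonpos (mul_nonpos_of_nonneg_of_nonpos hx.le hz),
      ProbabilityTheory.betaPDF_eq_zero_of_nonpos hz, zero_mul, mul_zero]
  rcases le_or_gt 1 z with hz1 | hz1
  · rw [riemannLiouvilleKernel_of_nonpos (t := -(x * z) + x) (by nlinarith),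
      ProbabilityTheory.betaPDF_eq_zero_of_one_le hz1, mul_zero, mul_zero]
  have hΓa := Real.Gamma_pos_of_pos ha
  have hΓb := Real.Gamma_pos_of_pos hb
  have hΓab := Real.Gamma_pos_of_pos (add_pos ha hb)
  rw [riemannLiouvilleKernel_of_pos (by positivity), riemannLiouvilleKernel_of_pos (by nlinarith),
    ProbabilityTheory.betaPDF_of_pos_lt_one hz hz1, ← ENNReal.ofReal_mul (by positivity),
    ← ENNReal.ofReal_mul (by positivity)]
  congr 1
  rw [show -(x * z) + x = x * (1 - z) by ring, Real.mul_rpow hx.le hz.le,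
    Real.mul_rpow hx.le (by linarith), show a + b - 2 = (a - 1) + (b - 1) by ring,
    Real.rpow_add hx, ProbabilityTheory.beta]
  field_simp

lemma riemannLiouvilleKernel_lconvolution_riemannLiouvilleKernel {a b : ℝ} (ha : 0 < a)
    (hb : 0 < b) :
    riemannLiouvilleKernel a ⋆ₗ riemannLiouvilleKernel b = riemannLiouvilleKernel (a + b) := by
  ext x
  rw [lconvolution_def]
  rcases le_or_gt x 0 with hx | hx
  · rw [riemannLiouvilleKernel_of_nonpos hx]
    refine (lintegral_congr fun y => ?_).trans lintegral_zero
    rcases le_or_gt y 0 with hy | hy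
    · rw [riemannLiouvilleKernel_of_nonpos hy, zero_mul]
    · rw [riemannLiouvilleKernel_of_nonpos (t := -y + x) (by linarith), mul_zero]
  · -- substitute `y = x z` and integrate the Beta density
    rw [← Real.smul_map_volume_mul_left hx.ne', lintegral_smul_measure,
      lintegral_map (by fun_prop) (measurable_const_mul x)]
    simp_rw [riemannLiouvilleKernel_mul_eq_betaPDF ha hb hx]
    rw [lintegral_const_mul' _ _ ENNReal.ofReal_ne_top,
      ProbabilityTheory.lintegral_betaPDF_eq_one ha hb, mul_one, riemannLiouvilleKernel_of_pos hx,
      abs_of_pos hx, smul_eq_mul, ← ENNReal.ofReal_mul hx.le]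
    congr 1
    rw [show a + b - 1 = 1 + (a + b - 2) by ring, Real.rpow_add hx, Real.rpow_one, mul_div_assoc]

section Convolution

variable {a t : ℝ} {f g : ℝ → ℝ≥0∞}

lemma riemannLiouvilleKernel_lconvolution_le_of_forall_lt (h : ∀ u < t, f u ≤ g u) :
    (riemannLiouvilleKernel a ⋆ₗ f) t ≤ (riemannLiouvilleKernel a ⋆ₗ g) t := by
  refine lintegral_mono fun y => ?_
  rcases le_or_gt y 0 with hy | hy
  · simp [riemannLiouvilleKernel_of_nonpos hy]
  · exact mul_le_mul_right (h _ (by linarith)) _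

lemma riemannLiouvilleKernel_lconvolution_const_mul_add (hf : Measurable f)
    (hg : AEMeasurable g) (c d : ℝ≥0∞) :
    (riemannLiouvilleKernel a ⋆ₗ fun u => c * f u + d * g u) t =
      c * (riemannLiouvilleKernel a ⋆ₗ f) t + d * (riemannLiouvilleKernel a ⋆ₗ g) t := by
  simp_rw [lconvolution_def, mul_add, mul_left_comm _ c, mul_left_comm _ d]
  rw [lintegral_add_left (by fun_prop), lintegral_const_mul _ (by fun_prop),
    lintegral_const_mul'' _ (by fun_prop)]

lemma riemannLiouvilleKernel_lconvolution_le_mul_lintegral {b : ℝ} (hb : 1 ≤ b)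
    (hf : ∀ s ≤ 0, f s = 0) :
    (riemannLiouvilleKernel b ⋆ₗ f) t ≤ riemannLiouvilleKernel b t * ∫⁻ s, f s := by
  rw [lconvolution_def, ← lintegral_sub_left_eq_self f t,
    ← lintegral_const_mul' _ _ riemannLiouvilleKernel_ne_top]
  refine lintegral_mono fun y => ?_
  rcases le_or_gt y 0 with hy | hy
  · simp [riemannLiouvilleKernel_of_nonpos hy]
  rcases le_or_gt t y with hty | hty
  · simp [hf (-y + t) (by linarith)]
  rw [neg_add_eq_sub, riemannLiouvilleKernel_of_pos hy,
    riemannLiouvilleKernel_of_pos (hy.trans hty)]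
  gcongr

end Convolution

lemma Real.rpow_mul_Gamma_le_Gamma_add {y a : ℝ} (hy : 1 < y) (ha : 0 < a) :
    (y - 1) ^ a * Real.Gamma y ≤ Real.Gamma (y + a) := by
  have hy1 : 0 < y - 1 := by linarith
  have hΓ₁ := Real.Gamma_pos_of_pos hy1
  have hΓ : Real.Gamma y = (y - 1) * Real.Gamma (y - 1) := by
    simpa using Real.Gamma_add_one hy1.ne'
  have hlog : Real.log (Real.Gamma y) - Real.log (Real.Gamma (y - 1)) = Real.log (y - 1) := by
    rw [hΓ, Real.log_mul hy1.ne' hΓ₁.ne', add_sub_cancel_right]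
  have hslope := Real.convexOn_log_Gamma.slope_mono_adjacent (x := y - 1) (y := y) (z := y + a)
    hy1 (by simp; linarith) (by linarith) (by linarith)
  simp only [Function.comp, sub_sub_cancel, div_one, add_sub_cancel_left, hlog,
    le_div_iff₀ ha] at hslope
  rw [← Real.log_le_log_iff (by positivity) (Real.Gamma_pos_of_pos (by linarith)),
    Real.log_mul (by positivity) (by positivity), Real.log_rpow hy1]
  linarith

noncomputable def mittagLeffler (a x : ℝ) : ℝ :=
  ∑' k : ℕ, x ^ k / Real.Gamma (a * k + 1)

lemma summable_mittagLeffler {a : ℝ} (ha : 0 < a) (x : ℝ) :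
    Summable fun k : ℕ => x ^ k / Real.Gamma (a * k + 1) := by
  have hgrowth : Tendsto (fun n : ℕ => (a * n) ^ a) atTop atTop :=
    (tendsto_rpow_atTop ha).comp (tendsto_natCast_atTop_atTop.const_mul_atTop ha)
  refine summable_of_ratio_norm_eventually_le (r := 1 / 2) (by norm_num) ?_
  filter_upwards [hgrowth.eventually_ge_atTop (2 * |x|), eventually_ge_atTop 1] with n hn hn1
  have han : 0 < a * n := mul_pos ha (by exact_mod_cast hn1)
  have hP : 0 < (a * n) ^ a := by positivity
  have hΓ := Real.Gamma_pos_of_pos (show 0 < a * n + 1 by linarith)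
  have hΓle : (a * n) ^ a * Real.Gamma (a * n + 1) ≤ Real.Gamma (a * (n + 1 : ℕ) + 1) := by
    have := Real.rpow_mul_Gamma_le_Gamma_add (y := a * n + 1) (by linarith) ha
    rw [add_sub_cancel_right] at this
    convert this using 2
    push_cast
    ring
  have hΓ' : 0 < Real.Gamma (a * (n + 1 : ℕ) + 1) := (mul_pos hP hΓ).trans_le hΓle
  simp only [norm_div, norm_pow, Real.norm_eq_abs, abs_of_pos hΓ, abs_of_pos hΓ']
  calc |x| ^ (n + 1) / Real.Gamma (a * (n + 1 : ℕ) + 1)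
      ≤ |x| ^ (n + 1) / ((a * n) ^ a * Real.Gamma (a * n + 1)) := by gcongr
    _ = |x| / (a * n) ^ a * (|x| ^ n / Real.Gamma (a * n + 1)) := by
      field_simp
      ring
    _ ≤ 1 / 2 * (|x| ^ n / Real.Gamma (a * n + 1)) := by
      refine mul_le_mul_of_nonneg_right ?_ (by positivity)
      rw [div_le_iff₀ hP]
      linarith

lemma mittagLeffler_zero (a : ℝ) : mittagLeffler a 0 = 1 := by
  rw [mittagLeffler, tsum_eq_single 0 fun k hk => by simp [hk]]
  simp

lemma mittagLeffler_nonneg {a x : ℝ} (ha : 0 ≤ a) (hx : 0 ≤ x) : 0 ≤ mittagLeffler a x :=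
  tsum_nonneg fun k => div_nonneg (pow_nonneg hx k) (Real.Gamma_nonneg_of_nonneg (by positivity))

lemma tendsto_mul_pow_div_Gamma {a : ℝ} (ha : 0 < a) (x : ℝ) :
    Tendsto (fun n : ℕ => n * x ^ n / Real.Gamma (a * n + 1)) atTop (𝓝 0) := by
  refine squeeze_zero_norm (fun n => ?_) (by
    simpa only [norm_zero] using (summable_mittagLeffler ha (2 * |x|)).tendsto_atTop_zero.norm)
  have hΓ := Real.Gamma_pos_of_pos (show 0 < a * n + 1 by positivity)
  have hn : (n : ℝ) ≤ 2 ^ n := mod_cast n.lt_two_pow_self.le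
  simp only [norm_div, norm_mul, norm_pow, Real.norm_of_nonneg hΓ.le, Real.norm_eq_abs,
    abs_abs, Nat.abs_cast, abs_two, mul_pow]
  gcongr

lemma tendsto_pow_mul_riemannLiouvilleKernel {a L t : ℝ} (ha : 0 < a) (hL : 0 ≤ L)
    (ht : 0 < t) :
    Tendsto (fun n : ℕ => ENNReal.ofReal L ^ (n + 1) * riemannLiouvilleKernel (a * (n + 1)) t)
      atTop (𝓝 0) := by
  have key (n : ℕ) : ENNReal.ofReal L ^ (n + 1) * riemannLiouvilleKernel (a * (n + 1)) t =
      ENNReal.ofReal (a / t * ((n + 1 : ℕ) * (L * t ^ a) ^ (n + 1) /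
        Real.Gamma (a * (n + 1 : ℕ) + 1))) := by
    have han : 0 < a * (n + 1) := by positivity
    rw [riemannLiouvilleKernel_of_pos ht, ← ENNReal.ofReal_pow hL,
      ← ENNReal.ofReal_mul (by positivity)]
    congr 1
    push_cast
    rw [Real.Gamma_add_one han.ne', Real.rpow_sub_one ht.ne', mul_pow,
      ← Real.rpow_natCast (t ^ a), ← Real.rpow_mul ht.le]
    push_cast
    field_simp
  have hlim := ((tendsto_mul_pow_div_Gamma ha (L * t ^ a)).comp
    (tendsto_add_atTop_nat 1)).const_mul (a / t)
  rw [mul_zero] at hlim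
  simpa only [key, ENNReal.ofReal_zero, Function.comp_def] using ENNReal.tendsto_ofReal hlim

noncomputable def mittagLefflerKernel (a : ℝ) (L : ℝ≥0∞) (t : ℝ) : ℝ≥0∞ :=
  ∑' k : ℕ, L ^ k * riemannLiouvilleKernel (a * k + 1) t

lemma measurable_mittagLefflerKernel (a : ℝ) (L : ℝ≥0∞) :
    Measurable (mittagLefflerKernel a L) :=
  Measurable.tsum fun _ => by fun_prop

lemma mittagLefflerKernel_ofReal {a L t : ℝ} (ha : 0 < a) (hL : 0 ≤ L) (ht : 0 < t) :
    mittagLefflerKernel a (ENNReal.ofReal L) t =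
      ENNReal.ofReal (mittagLeffler a (L * t ^ a)) := by
  rw [mittagLefflerKernel, mittagLeffler, ENNReal.ofReal_tsum_of_nonneg
    (fun k => by have := Real.Gamma_pos_of_pos (show 0 < a * k + 1 by positivity); positivity)
    (summable_mittagLeffler ha _)]
  refine tsum_congr fun k => ?_
  rw [riemannLiouvilleKernel_of_pos ht, ← ENNReal.ofReal_pow hL,
    ← ENNReal.ofReal_mul (by positivity), add_sub_cancel_right, mul_pow,
    ← Real.rpow_natCast (t ^ a), ← Real.rpow_mul ht.le, mul_div_assoc]

lemma riemannLiouvilleKernel_one_add_lconvolution_mittagLefflerKernel {a : ℝ} (ha : 0 < a)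
    (L : ℝ≥0∞) (t : ℝ) :
    riemannLiouvilleKernel 1 t + L * (riemannLiouvilleKernel a ⋆ₗ mittagLefflerKernel a L) t =
      mittagLefflerKernel a L t := by
  have hconv : (riemannLiouvilleKernel a ⋆ₗ mittagLefflerKernel a L) t =
      ∑' k : ℕ, L ^ k * riemannLiouvilleKernel (a * (k + 1 : ℕ) + 1) t := by
    simp_rw [lconvolution_def, mittagLefflerKernel, ← ENNReal.tsum_mul_left]
    rw [lintegral_tsum fun k => by fun_prop]
    refine tsum_congr fun k => ?_
    simp_rw [mul_left_comm _ (L ^ k)]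
    rw [lintegral_const_mul _ (by fun_prop), ← lconvolution_def,
      riemannLiouvilleKernel_lconvolution_riemannLiouvilleKernel ha (by positivity)]
    push_cast
    ring_nf
  rw [hconv, ← ENNReal.tsum_mul_left, mittagLefflerKernel,
    tsum_eq_zero_add' (f := fun k : ℕ => L ^ k * riemannLiouvilleKernel (a * k + 1) t)
      ENNReal.summable]
  simp [pow_succ', mul_assoc]

section Gronwall

variable {a t : ℝ} {c : ℝ≥0∞} {F : ℝ → ℝ≥0∞}

theorem le_mittagLefflerKernel_add_lconvolution {L : ℝ≥0∞} (ha : 0 < a) (hF : AEMeasurable F)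
    (h : ∀ s ≤ t, F s ≤ c * riemannLiouvilleKernel 1 s + L * (riemannLiouvilleKernel a ⋆ₗ F) s)
    (n : ℕ) : ∀ s ≤ t, F s ≤ c * mittagLefflerKernel a L s +
      L ^ (n + 1) * (riemannLiouvilleKernel (a * (n + 1)) ⋆ₗ F) s := by
  induction n with
  | zero =>
    intro s hs
    refine (h s hs).trans ?_
    rw [Nat.cast_zero, zero_add, zero_add, mul_one, pow_one]
    gcongr
    simpa [mittagLefflerKernel] using
      ENNReal.le_tsum (f := fun k : ℕ => L ^ k * riemannLiouvilleKernel (a * k + 1) s) 0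
  | succ n ih =>
    intro s hs
    have hpos : 0 < a * (n + 1) := by positivity
    calc F s ≤ c * riemannLiouvilleKernel 1 s + L * (riemannLiouvilleKernel a ⋆ₗ F) s := h s hs
      _ ≤ c * riemannLiouvilleKernel 1 s + L * (riemannLiouvilleKernel a ⋆ₗ fun u =>
            c * mittagLefflerKernel a L u +
              L ^ (n + 1) * (riemannLiouvilleKernel (a * (n + 1)) ⋆ₗ F) u) s := by
        gcongr
        exact riemannLiouvilleKernel_lconvolution_le_of_forall_lt fun u hu =>
          ih u (hu.le.trans hs)
      _ = c * (riemannLiouvilleKernel 1 s + L * (riemannLiouvilleKernel a ⋆ₗ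
            mittagLefflerKernel a L) s) + L ^ (n + 2) * ((riemannLiouvilleKernel a ⋆ₗ
              riemannLiouvilleKernel (a * (n + 1))) ⋆ₗ F) s := by
        rw [riemannLiouvilleKernel_lconvolution_const_mul_add
          (measurable_mittagLefflerKernel a L) (by fun_prop),
          ← lconvolution_assoc₀ (by fun_prop) (by fun_prop) hF]
        ring
      _ = _ := by
        rw [riemannLiouvilleKernel_one_add_lconvolution_mittagLefflerKernel ha,
          riemannLiouvilleKernel_lconvolution_riemannLiouvilleKernel ha hpos]
        push_cast
        ring_nf

theorem le_mittagLefflerKernel_of_le_add_lconvolution {L : ℝ} (ha : 0 < a) (hL : 0 ≤ L)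
    (ht : 0 < t) (hF : AEMeasurable F) (hF0 : ∀ s ≤ 0, F s = 0) (hFint : ∫⁻ s, F s ≠ ∞)
    (h : ∀ s ≤ t, F s ≤
      c * riemannLiouvilleKernel 1 s + ENNReal.ofReal L * (riemannLiouvilleKernel a ⋆ₗ F) s) :
    F t ≤ c * mittagLefflerKernel a (ENNReal.ofReal L) t := by
  have hrem : Tendsto (fun n : ℕ => c * mittagLefflerKernel a (ENNReal.ofReal L) t +
      ENNReal.ofReal L ^ (n + 1) * riemannLiouvilleKernel (a * (n + 1)) t * ∫⁻ s, F s) atTop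
      (𝓝 (c * mittagLefflerKernel a (ENNReal.ofReal L) t)) := by
    simpa using tendsto_const_nhds.add (ENNReal.Tendsto.mul_const
      (tendsto_pow_mul_riemannLiouvilleKernel ha hL ht) (Or.inr hFint))
  have hlarge : ∀ᶠ n : ℕ in atTop, 1 ≤ a * n :=
    (tendsto_natCast_atTop_atTop.const_mul_atTop ha).eventually_ge_atTop 1
  refine ge_of_tendsto hrem (hlarge.mono fun n hn => ?_)
  refine (le_mittagLefflerKernel_add_lconvolution ha hF h n t le_rfl).trans ?_
  rw [mul_assoc]
  gcongr
  exact riemannLiouvilleKernel_lconvolution_le_mul_lintegral (by linarith) hF0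

end Gronwall

lemma ofReal_integral_exp_mul_le_lconvolution {a κ t : ℝ} {g : ℝ → ℝ} {F : ℝ → ℝ≥0∞}
    (ha : 0 < a) (hκ : κ ≤ 0) (ht : 0 ≤ t) (hg : ∀ s ∈ Ioo 0 t, 0 ≤ g s)
    (hF : ∀ s ∈ Ioo 0 t, F s = ENNReal.ofReal (g s)) :
    ENNReal.ofReal (∫ s in 0..t, Real.exp (κ * (t - s)) * (t - s) ^ (a - 1) * g s) ≤
      ENNReal.ofReal (Real.Gamma a) * (riemannLiouvilleKernel a ⋆ₗ F) t := by
  have hΓ := Real.Gamma_pos_of_pos ha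
  rw [intervalIntegral.integral_of_le ht, integral_Ioc_eq_integral_Ioo, lconvolution_comm,
    lconvolution_def, ← lintegral_const_mul' _ _ ENNReal.ofReal_ne_top]
  refine (Real.ofReal_le_enorm _).trans <| (enorm_integral_le_lintegral_enorm _).trans <|
    (setLIntegral_mono' measurableSet_Ioo fun s hs => ?_).trans (setLIntegral_le_lintegral _ _)
  have hts : 0 < t - s := by linarith [hs.2]
  have hexp : Real.exp (κ * (t - s)) ≤ 1 := Real.exp_le_one_iff.mpr (by nlinarith)
  have hgs := hg s hs
  rw [hF s hs, ← sub_eq_neg_add, riemannLiouvilleKernel_of_pos hts, ← ENNReal.ofReal_mul hgs,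
    ← ENNReal.ofReal_mul hΓ.le, Real.enorm_eq_ofReal_abs]
  refine ENNReal.ofReal_le_ofReal ?_
  rw [abs_of_nonneg (by positivity)]
  calc Real.exp (κ * (t - s)) * (t - s) ^ (a - 1) * g s ≤ (t - s) ^ (a - 1) * g s := by
        rw [mul_assoc]
        exact mul_le_of_le_one_left (by positivity) hexp
    _ = Real.Gamma a * (g s * ((t - s) ^ (a - 1) / Real.Gamma a)) := by
        field_simp

lemma indicator_le_add_lconvolution {a κ h T t : ℝ} {g J : ℝ → ℝ} (ha : 0 < a) (hκ : κ ≤ 0)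
    (hh : 0 ≤ h) (hg0 : ∀ s ∈ Icc 0 T, 0 ≤ g s) (hJmono : MonotoneOn J (Icc 0 T))
    (hineq : ∀ s ∈ Icc 0 T,
      g s ≤ J s + h * ∫ u in (0:ℝ)..s, Real.exp (κ * (s - u)) * (s - u) ^ (a - 1) * g u)
    (ht : t ∈ Icc 0 T) (s : ℝ) (hst : s ≤ t) :
    (Ioc 0 T).indicator (fun u => ENNReal.ofReal (g u)) s ≤
      ENNReal.ofReal (J t) * riemannLiouvilleKernel 1 s + ENNReal.ofReal (h * Real.Gamma a) *
        (riemannLiouvilleKernel a ⋆ₗ (Ioc 0 T).indicator fun u => ENNReal.ofReal (g u)) s := by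
  rcases le_or_gt s 0 with hs0 | hs0
  · simp [indicator_of_notMem (fun hs : s ∈ Ioc 0 T => hs0.not_gt hs.1)]
  have hs : s ∈ Icc 0 T := ⟨hs0.le, hst.trans ht.2⟩
  have hIoo : ∀ u ∈ Ioo 0 s, u ∈ Ioc 0 T := fun u hu => ⟨hu.1, hu.2.le.trans hs.2⟩
  rw [indicator_of_mem (show s ∈ Ioc 0 T from ⟨hs0, hs.2⟩), riemannLiouvilleKernel_of_pos hs0,
    sub_self, Real.rpow_zero, Real.Gamma_one, div_one, ENNReal.ofReal_one, mul_one,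
    ENNReal.ofReal_mul hh, mul_assoc]
  calc ENNReal.ofReal (g s)
      ≤ ENNReal.ofReal (J s) + ENNReal.ofReal h * ENNReal.ofReal (∫ u in (0:ℝ)..s,
          Real.exp (κ * (s - u)) * (s - u) ^ (a - 1) * g u) := by
        rw [← ENNReal.ofReal_mul hh]
        exact (ENNReal.ofReal_le_ofReal (hineq s hs)).trans ENNReal.ofReal_add_le
    _ ≤ _ := by
        gcongr
        · exact hJmono hs ht hst
        · exact ofReal_integral_exp_mul_le_lconvolution ha hκ hs0.le
            (fun u hu => hg0 u (Ioc_subset_Icc_self (hIoo u hu)))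
            fun u hu => indicator_of_mem (hIoo u hu) _

theorem stmt_2_general (α μ T h : ℝ) (g J : ℝ → ℝ)
    (hα : α ∈ Set.Ioo (0:ℝ) 1) (hμ : μ ∈ Set.Ioc (0:ℝ) 1)
    (hg0 : ∀ t ∈ Set.Icc (0:ℝ) T, 0 ≤ g t)
    (hJ0 : ∀ t ∈ Set.Icc (0:ℝ) T, 0 ≤ J t)
    (hgint : MeasureTheory.IntegrableOn g (Set.Icc 0 T))
    (hh : 0 ≤ h)
    (hJmono : MonotoneOn J (Set.Icc 0 T))
    (hineq : ∀ t ∈ Set.Icc (0:ℝ) T,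
      g t ≤ J t + h * ∫ s in (0:ℝ)..t,
        Real.exp ((μ - 1) / μ * (t - s)) * (t - s) ^ (α - 1) * g s) :
    ∀ t ∈ Set.Icc (0:ℝ) T,
      g t ≤ J t * ∑' k : ℕ, (h * Real.Gamma α * t ^ α) ^ k / Real.Gamma (α * k + 1) := by
  intro t ht
  have hα0 := hα.1
  change g t ≤ J t * mittagLeffler α (h * Real.Gamma α * t ^ α)
  -- `mittagLefflerKernel` vanishes at `0`, where `E_α = 1`
  rcases ht.1.eq_or_lt with rfl | ht0
  · rw [Real.zero_rpow hα0.ne', mul_zero, mittagLeffler_zero, mul_one]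
    simpa using hineq 0 ht
  have hgint' : IntegrableOn g (Ioc 0 T) := hgint.mono_set Ioc_subset_Icc_self
  have hκ : (μ - 1) / μ ≤ 0 := div_nonpos_of_nonpos_of_nonneg (by linarith [hμ.2]) hμ.1.le
  have hL : 0 ≤ h * Real.Gamma α := mul_nonneg hh (Real.Gamma_pos_of_pos hα0).le
  have key := le_mittagLefflerKernel_of_le_add_lconvolution hα0 hL ht0
    ((aemeasurable_indicator_iff measurableSet_Ioc).mpr hgint'.aemeasurable.ennreal_ofReal)
    (fun s hs => indicator_of_notMem (fun hs' : s ∈ Ioc 0 T => hs.not_gt hs'.1) _)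
    (by rw [lintegral_indicator measurableSet_Ioc]; exact hgint'.lintegral_lt_top.ne)
    (indicator_le_add_lconvolution hα0 hκ hh hg0 hJmono hineq ht)
  rwa [mittagLefflerKernel_ofReal hα0 hL ht0,
    indicator_of_mem (show t ∈ Ioc 0 T from ⟨ht0, ht.2⟩), ← ENNReal.ofReal_mul (hJ0 t ht),
    ENNReal.ofReal_le_ofReal_iff (mul_nonneg (hJ0 t ht)
      (mittagLeffler_nonneg hα0.le (by positivity)))] at key

theorem stmt_2 (α μ T h : ℝ) (g J : ℝ → ℝ)
    (hα : α ∈ Set.Ioo (0:ℝ) 1) (hμ : μ ∈ Set.Ioc (0:ℝ) 1) (hT : 0 < T)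
    (hg0 : ∀ t ∈ Set.Icc (0:ℝ) T, 0 ≤ g t)
    (hJ0 : ∀ t ∈ Set.Icc (0:ℝ) T, 0 ≤ J t)
    (hgint : MeasureTheory.IntegrableOn g (Set.Icc 0 T))
    (hJcont : ContinuousOn J (Set.Icc 0 T))
    (hh : 0 ≤ h)
    (hJmono : MonotoneOn J (Set.Icc 0 T))
    (hineq : ∀ t ∈ Set.Icc (0:ℝ) T,
      g t ≤ J t + h * ∫ s in (0:ℝ)..t,
        Real.exp ((μ - 1) / μ * (t - s)) * (t - s) ^ (α - 1) * g s) :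
    ∀ t ∈ Set.Icc (0:ℝ) T,
      g t ≤ J t * ∑' k : ℕ, (h * Real.Gamma α * t ^ α) ^ k / Real.Gamma (α * k + 1) :=
  stmt_2_general α μ T h g J hα hμ hg0 hJ0 hgint hh hJmono hineq
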